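/- Let f ∈ ℂ{x,y} be reduced with {ω₁ = A₁dx + B₁dy, ω₂ = A₂dx + B₂dy} a Saito basis of S(f), with cofactors h₁, h₂ (ωᵢ ∧ df = hᵢ f dx∧dy). Suppose α = ord(A₁(x,0)) ≤ ord(A₂(x,0)), where A₁(x,0) ≠ 0. Then η₁ := (A₂(x,0)/x^α)·ω₁ − (A₁(x,0)/x^α)·ω₂ and η₂ := y·ω₁ form a Saito basis of S(y·f), and η₂ ∧ d(yf) = (y·h₁ + A₁)·y·f·dx∧dy. -/

import Mathlib

open MvPowerSeries

noncomputable section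

/-- `ℂ{x,y}`, modeled as formal power series in two variables. -/
abbrev PS := MvPowerSeries (Fin 2) ℂ

/-- Formal partial derivative with respect to variable `i`. -/
noncomputable def pd (i : Fin 2) (f : PS) : PS :=
  fun m => ((m i : ℂ) + 1) * MvPowerSeries.coeff (m + Finsupp.single i 1) f

/-- The pair `(f_x, f_y)` representing the differential `df = f_x dx + f_y dy`;
a 1-form `A dx + B dy` is modeled as the pair `(A, B)`. -/
noncomputable def dd (f : PS) : PS × PS := (pd 0 f, pd 1 f)

/-- `(A dx + B dy) ∧ (C dx + D dy) = (A D - B C) dx∧dy`, recorded by its coefficient. -/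
def wedge (ω η : PS × PS) : PS := ω.1 * η.2 - ω.2 * η.1

/-- The Saito module `S(f)`: 1-forms `ω` with `ω ∧ df = h·f·dx∧dy` for some `h`. -/
def SaitoSet (f : PS) : Set (PS × PS) := {ω | ∃ h : PS, wedge ω (dd f) = h * f}

/-- `F(f) = ℂ{x,y}·df + f·Ω¹`. -/
def FSet (f : PS) : Set (PS × PS) := {ω | ∃ (p : PS) (η : PS × PS), ω = p • dd f + f • η}

/-- The substitution `y = 0` in a power series, leaving a series in `x` only. -/
noncomputable def subY0 (f : PS) : PS :=
  fun m => if m 1 = 0 then MvPowerSeries.coeff m f else 0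

/-!
Since `d(y f) = y df + f dy`, a form `ω ∈ S(f)` whose `dx`-coefficient is divisible by `y` lies in
`S(y f)`. Both `η₂ = y ω₁` and `η₁ = c₂ ω₁ - c₁ ω₂` have this property: for `η₁` the restrictions to
`y = 0` of `c₂ A₁` and `c₁ A₂` both equal `x^α c₁ c₂`. Saito's criterion for `η₁, η₂` is then the
computation `η₁ ∧ y ω₁ = c₁ y (ω₁ ∧ ω₂)`.
-/

theorem pd_eq_pderiv (i : Fin 2) (f : PS) : pd i f = pderiv ℂ i f := by
  ext m
  exact mul_comm _ _

theorem dd_mul (f g : PS) : dd (f * g) = f • dd g + g • dd f := by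
  simp only [dd, pd_eq_pderiv, Derivation.leibniz, Prod.smul_mk, Prod.mk_add_mk]

theorem dd_X_one : dd (X 1 : PS) = (0, 1) := by
  simp [dd, pd_eq_pderiv]

theorem wedge_add_left (ω η ξ : PS × PS) : wedge (ω + η) ξ = wedge ω ξ + wedge η ξ := by
  simp only [wedge, Prod.fst_add, Prod.snd_add]
  ring

theorem wedge_smul_left (a : PS) (ω ξ : PS × PS) : wedge (a • ω) ξ = a * wedge ω ξ := by
  simp only [wedge, Prod.smul_fst, Prod.smul_snd, smul_eq_mul]
  ring

theorem wedge_dd_X_one_mul (ω : PS × PS) (f : PS) :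
    wedge ω (dd (X 1 * f)) = X 1 * wedge ω (dd f) + ω.1 * f := by
  simp only [dd_mul, dd_X_one, wedge, Prod.fst_add, Prod.snd_add, Prod.smul_fst, Prod.smul_snd,
    smul_eq_mul]
  ring

def saitoSubmodule (f : PS) : Submodule PS (PS × PS) where
  carrier := SaitoSet f
  zero_mem' := ⟨0, by simp [wedge]⟩
  add_mem' := by
    rintro ω η ⟨g, hg⟩ ⟨k, hk⟩
    exact ⟨g + k, by rw [wedge_add_left, hg, hk, add_mul]⟩
  smul_mem' := by
    rintro a ω ⟨g, hg⟩
    exact ⟨a * g, by rw [wedge_smul_left, hg, mul_assoc]⟩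

theorem mem_saitoSet_X_one_mul {f : PS} {ω : PS × PS} (hω : ω ∈ SaitoSet f)
    (hdvd : X 1 ∣ ω.1) : ω ∈ SaitoSet (X 1 * f) := by
  obtain ⟨g, hg⟩ := hω
  obtain ⟨r, hr⟩ := hdvd
  exact ⟨g + r, by rw [wedge_dd_X_one_mul, hg, hr]; ring⟩

theorem coeff_subY0 (g : PS) (m : Fin 2 →₀ ℕ) :
    coeff m (subY0 g) = if m 1 = 0 then coeff m g else 0 := rfl

theorem X_one_dvd_sub_subY0 (g : PS) : X 1 ∣ g - subY0 g :=
  X_dvd_iff.mpr fun m hm => by rw [map_sub, coeff_subY0, if_pos hm, sub_self]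

theorem X_one_dvd_mul_sub_mul {a b c d : PS} (h : c * subY0 a = d * subY0 b) :
    X 1 ∣ c * a - d * b := by
  have hsplit : c * a - d * b = c * (a - subY0 a) - d * (b - subY0 b) := by
    linear_combination h
  rw [hsplit]
  exact ((X_one_dvd_sub_subY0 a).mul_left c).sub ((X_one_dvd_sub_subY0 b).mul_left d)

theorem saito_basis_of_y_mul_general (f : PS)
    (A₁ B₁ A₂ B₂ h₁ h₂ u : PS) (hu : IsUnit u)
    (hω₁ : wedge (A₁, B₁) (dd f) = h₁ * f) (hω₂ : wedge (A₂, B₂) (dd f) = h₂ * f)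
    (hbasis : wedge (A₁, B₁) (A₂, B₂) = u * f)
    (α : ℕ) (c₁ c₂ : PS)
    (hc₁ : subY0 A₁ = (X 0 : PS) ^ α * c₁) (hc₁u : IsUnit c₁)
    (hc₂ : subY0 A₂ = (X 0 : PS) ^ α * c₂) :
    c₂ • ((A₁, B₁) : PS × PS) - c₁ • ((A₂, B₂) : PS × PS) ∈ SaitoSet ((X 1 : PS) * f) ∧
    (X 1 : PS) • ((A₁, B₁) : PS × PS) ∈ SaitoSet ((X 1 : PS) * f) ∧
    wedge (c₂ • ((A₁, B₁) : PS × PS) - c₁ • ((A₂, B₂) : PS × PS))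
        ((X 1 : PS) • ((A₁, B₁) : PS × PS)) = (c₁ * u) * ((X 1 : PS) * f) ∧
    IsUnit (c₁ * u) ∧
    wedge ((X 1 : PS) • ((A₁, B₁) : PS × PS)) (dd ((X 1 : PS) * f)) =
      ((X 1 : PS) * h₁ + A₁) * ((X 1 : PS) * f) := by
  have hω₁S : ((A₁, B₁) : PS × PS) ∈ saitoSubmodule f := ⟨h₁, hω₁⟩
  have hω₂S : ((A₂, B₂) : PS × PS) ∈ saitoSubmodule f := ⟨h₂, hω₂⟩
  have hη₁ := (saitoSubmodule f).sub_mem ((saitoSubmodule f).smul_mem c₂ hω₁S)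
    ((saitoSubmodule f).smul_mem c₁ hω₂S)
  have hdvd : X 1 ∣ c₂ * A₁ - c₁ * A₂ :=
    X_one_dvd_mul_sub_mul (by rw [hc₁, hc₂]; ring)
  refine ⟨mem_saitoSet_X_one_mul hη₁ hdvd,
    mem_saitoSet_X_one_mul ((saitoSubmodule f).smul_mem _ hω₁S) (dvd_mul_right _ _), ?_,
    hc₁u.mul hu, ?_⟩
  · simp only [wedge, Prod.smul_mk, Prod.mk_sub_mk, smul_eq_mul] at hbasis ⊢
    linear_combination X 1 * c₁ * hbasis
  · rw [wedge_smul_left, wedge_dd_X_one_mul, hω₁]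
    ring

theorem saito_basis_of_y_mul (f : PS) (hred : Squarefree ((X 1 : PS) * f))
    (A₁ B₁ A₂ B₂ h₁ h₂ u : PS) (hu : IsUnit u)
    (hω₁ : wedge (A₁, B₁) (dd f) = h₁ * f) (hω₂ : wedge (A₂, B₂) (dd f) = h₂ * f)
    (hbasis : wedge (A₁, B₁) (A₂, B₂) = u * f)
    (hA₁0 : subY0 A₁ ≠ 0)
    (α : ℕ) (c₁ c₂ : PS)
    (hc₁ : subY0 A₁ = (X 0 : PS) ^ α * c₁) (hc₁u : IsUnit c₁)
    (hc₂ : subY0 A₂ = (X 0 : PS) ^ α * c₂) :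
    c₂ • ((A₁, B₁) : PS × PS) - c₁ • ((A₂, B₂) : PS × PS) ∈ SaitoSet ((X 1 : PS) * f) ∧
    (X 1 : PS) • ((A₁, B₁) : PS × PS) ∈ SaitoSet ((X 1 : PS) * f) ∧
    wedge (c₂ • ((A₁, B₁) : PS × PS) - c₁ • ((A₂, B₂) : PS × PS))
        ((X 1 : PS) • ((A₁, B₁) : PS × PS)) = (c₁ * u) * ((X 1 : PS) * f) ∧
    IsUnit (c₁ * u) ∧
    wedge ((X 1 : PS) • ((A₁, B₁) : PS × PS)) (dd ((X 1 : PS) * f)) =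
      ((X 1 : PS) * h₁ + A₁) * ((X 1 : PS) * f) :=
  saito_basis_of_y_mul_general f A₁ B₁ A₂ B₂ h₁ h₂ u hu hω₁ hω₂ hbasis α c₁ c₂ hc₁ hc₁u hc₂
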